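/- If A ∈ ℝ^{m×n} has full row rank, V is a null-space basis matrix of A, and x, s ∈ ℝ^n are strictly positive, then the matrix O = [−X Aᵀ S V] ∈ ℝ^{n×n} is invertible. -/

import Mathlib

/-!
A vector `(y, z)` in the kernel of `O` satisfies `X Aᵀ y = S V z`. The vectors `Aᵀ y` and `V z`
are orthogonal, since `A V = 0`, while coordinatewise `(Aᵀ y)ᵢ (V z)ᵢ = (sᵢ / xᵢ) (V z)ᵢ² ≥ 0`.
Hence every product vanishes, so `V z = 0` and `Aᵀ y = 0`, and injectivity of `V` and `Aᵀ`
gives `y = z = 0`.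
-/

open Matrix

theorem Matrix.mulVec_injective_of_rank_eq_card {K m n : Type*} [Field K] [Fintype m] [Fintype n]
    (A : Matrix m n K) (hA : A.rank = Fintype.card n) : Function.Injective A.mulVec := by
  rw [← coe_mulVecLin, ← LinearMap.ker_eq_bot, ← Submodule.finrank_eq_zero]
  have := LinearMap.finrank_range_add_finrank_ker A.mulVecLin
  rw [← rank, hA, Module.finrank_fintype_fun_eq_card] at this
  omega

variable {R : Type*} [Field R] [LinearOrder R] [IsStrictOrderedRing R]

theorem eq_zero_and_eq_zero_of_mul_eq_mul_of_dotProduct_eq_zero {ι : Type*} [Fintype ι]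
    {x s v w : ι → R} (hx : ∀ i, 0 < x i) (hs : ∀ i, 0 < s i)
    (h : ∀ i, x i * v i = s i * w i) (horth : v ⬝ᵥ w = 0) : v = 0 ∧ w = 0 := by
  have hprod_nonneg : ∀ i, 0 ≤ v i * w i := fun i =>
    (mul_nonneg_iff_of_pos_left (hx i)).mp <| by
      rw [← mul_assoc, h i, mul_assoc, ← sq]; exact mul_nonneg (hs i).le (sq_nonneg _)
  have hprod : ∀ i, v i * w i = 0 := fun i =>
    (Finset.sum_eq_zero_iff_of_nonneg fun j _ => hprod_nonneg j).mp horth i (Finset.mem_univ i)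
  have hw : w = 0 := funext fun i => by
    have : s i * w i ^ 2 = 0 := by rw [sq, ← mul_assoc, ← h i, mul_assoc, hprod i, mul_zero]
    simpa [(hs i).ne'] using this
  refine ⟨funext fun i => ?_, hw⟩
  have hxv : x i * v i = 0 := by rw [h i, hw, Pi.zero_apply, mul_zero]
  exact (mul_eq_zero.mp hxv).resolve_left (hx i).ne'

theorem Matrix.mulVec_fromCols_neg_diagonal_mul_diagonal_mul_injective
    {ι m k : Type*} [Fintype ι] [DecidableEq ι] [Fintype m] [Fintype k]
    {P : Matrix ι m R} {Q : Matrix ι k R} (hP : Function.Injective P.mulVec)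
    (hQ : Function.Injective Q.mulVec) (hPQ : Pᵀ * Q = 0)
    {x s : ι → R} (hx : ∀ i, 0 < x i) (hs : ∀ i, 0 < s i) :
    Function.Injective (fromCols (-(diagonal x * P)) (diagonal s * Q)).mulVec := by
  rw [← coe_mulVecLin, injective_iff_map_eq_zero]
  intro u hu
  set y := u ∘ Sum.inl
  set z := u ∘ Sum.inr
  have hbalance : ∀ i, x i * (P *ᵥ y) i = s i * (Q *ᵥ z) i := fun i => by
    have := congrFun hu i
    simp only [coe_mulVecLin, fromCols_mulVec, neg_mulVec, ← mulVec_mulVec, mulVec_diagonal,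
      Pi.add_apply, Pi.neg_apply, Pi.zero_apply] at this
    linarith
  have horth : (P *ᵥ y) ⬝ᵥ (Q *ᵥ z) = 0 := by
    rw [← vecMul_transpose, ← dotProduct_mulVec, mulVec_mulVec, hPQ, zero_mulVec,
      dotProduct_zero]
  obtain ⟨hPy, hQz⟩ := eq_zero_and_eq_zero_of_mul_eq_mul_of_dotProduct_eq_zero hx hs hbalance horth
  have hy : y = 0 := hP (by rw [hPy, mulVec_zero])
  have hz : z = 0 := hQ (by rw [hQz, mulVec_zero])
  ext (p | q)
  · exact congrFun hy p
  · exact congrFun hz q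

/-- if A has full row rank, V is a null-space basis matrix of A,
and x, s > 0, then O = [-X Aᵀ  S V] is invertible. -/
theorem oss_matrix_invertible {m k n : ℕ}
    (A : Matrix (Fin m) (Fin n) ℝ) (hrank : A.rank = m)
    (V : Matrix (Fin n) (Fin k) ℝ)
    (hVrange : LinearMap.range V.mulVecLin = LinearMap.ker A.mulVecLin)
    (hVinj : Function.Injective V.mulVecLin)
    (x s : Fin n → ℝ) (hx : ∀ i, 0 < x i) (hs : ∀ i, 0 < s i)
    (e : Fin m ⊕ Fin k ≃ Fin n)
    (O : Matrix (Fin n) (Fin n) ℝ)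
    (hO : ∀ i j, O i j =
      Sum.elim (fun p => -(x i) * A p i) (fun q => s i * V i q) (e.symm j)) :
    IsUnit O.det := by
  have hAt : Function.Injective Aᵀ.mulVec :=
    Aᵀ.mulVec_injective_of_rank_eq_card (by rw [rank_transpose, hrank, Fintype.card_fin])
  have hAV : Aᵀᵀ * V = 0 := by
    rw [transpose_transpose]
    apply toLin'.injective
    rw [toLin'_mul, map_zero]
    exact LinearMap.range_le_ker_iff.mp hVrange.le
  have hO' : O = (fromCols (-(diagonal x * Aᵀ)) (diagonal s * V)).submatrix id e.symm := by
    ext i j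
    rcases hj : e.symm j with p | q <;> simp [hO, hj]
  rw [← isUnit_iff_isUnit_det, ← mulVec_injective_iff_isUnit, hO']
  intro u v huv
  simp only [submatrix_mulVec_equiv, Equiv.symm_symm, Function.comp_id] at huv
  have hue := mulVec_fromCols_neg_diagonal_mul_diagonal_mul_injective hAt hVinj hAV hx hs huv
  simpa [Function.comp_assoc] using congrArg (· ∘ e.symm) hue
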